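/- Let A : ℝ^n → ℝ^n be measurable with A(ξ)·ξ ≥ 0 for a.e. point, satisfying the homogeneity A(tξ) = |t|^{p-2} t A(ξ) and pointwise convexity of ξ ↦ A(ξ)·ξ. Then for Γ₁, Γ₂ ∈ (L^p(Ω))^n, (∫_Ω A(Γ₁+Γ₂)·(Γ₁+Γ₂) dx)^{1/p} ≤ (∫_Ω A(Γ₁)·Γ₁ dx)^{1/p} + (∫_Ω A(Γ₂)·Γ₂ dx)^{1/p}. -/

import Mathlib

/-!
For each `x`, the energy `g ξ = A(x, ξ) · ξ` is nonnegative, convex and positively homogeneous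
of degree `p`, so `g ^ (1 / p)` is subadditive: it is the gauge of the convex sublevel set
`{g ≤ 1}`. Applying Minkowski's inequality in `L^p` to the functions `(A(x, Γᵢ x) · Γᵢ x) ^ (1 / p)`
integrates this pointwise inequality.
-/

open Real MeasureTheory

section Homogeneous

variable {E : Type*} [AddCommGroup E] [Module ℝ E] {p : ℝ} {g : E → ℝ}

theorem ConvexOn.le_add_rpow_of_le_rpow (hg : ConvexOn ℝ Set.univ g)
    (hhom : ∀ t : ℝ, 0 < t → ∀ ξ, g (t • ξ) = t ^ p * g ξ) {ξ η : E} {a b : ℝ}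
    (ha : 0 < a) (hb : 0 < b) (hξ : g ξ ≤ a ^ p) (hη : g η ≤ b ^ p) :
    g (ξ + η) ≤ (a + b) ^ p := by
  have hab : 0 < a + b := add_pos ha hb
  have normalize : ∀ {s : ℝ} {v : E}, 0 < s → g v ≤ s ^ p → g (s⁻¹ • v) ≤ 1 := by
    intro s v hs hv
    rw [hhom _ (inv_pos.2 hs), inv_rpow hs.le]
    exact inv_mul_le_one_of_le₀ hv (by positivity)
  have hsplit : ξ + η = (a + b) • ((a / (a + b)) • (a⁻¹ • ξ) + (b / (a + b)) • (b⁻¹ • η)) := by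
    match_scalars <;> field_simp
  calc g (ξ + η)
      = (a + b) ^ p * g ((a / (a + b)) • (a⁻¹ • ξ) + (b / (a + b)) • (b⁻¹ • η)) := by
        rw [hsplit, hhom _ hab]
    _ ≤ (a + b) ^ p * (a / (a + b) * g (a⁻¹ • ξ) + b / (a + b) * g (b⁻¹ • η)) := by
        gcongr
        exact hg.2 trivial trivial (by positivity) (by positivity) (by field_simp)
    _ ≤ (a + b) ^ p * (a / (a + b) * 1 + b / (a + b) * 1) := by
        gcongr
        exacts [normalize ha hξ, normalize hb hη]
    _ = (a + b) ^ p := by field_simp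

theorem ConvexOn.rpow_one_div_add_le (hp : 0 < p) (hg0 : ∀ ξ, 0 ≤ g ξ)
    (hg : ConvexOn ℝ Set.univ g) (hhom : ∀ t : ℝ, 0 < t → ∀ ξ, g (t • ξ) = t ^ p * g ξ)
    (ξ η : E) : g (ξ + η) ^ (1 / p) ≤ g ξ ^ (1 / p) + g η ^ (1 / p) := by
  have root_pow : ∀ {x : ℝ}, 0 ≤ x → (x ^ (1 / p)) ^ p = x := fun hx => by
    rw [one_div, rpow_inv_rpow hx hp.ne']
  have pow_root : ∀ {x : ℝ}, 0 ≤ x → (x ^ p) ^ (1 / p) = x := fun hx => by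
    rw [one_div, rpow_rpow_inv hx hp.ne']
  refine le_of_forall_pos_le_add fun ε hε => ?_
  have hpos : ∀ v, 0 < g v ^ (1 / p) + ε / 2 := fun v => by
    have := rpow_nonneg (hg0 v) (1 / p); positivity
  have le_rpow : ∀ v, g v ≤ (g v ^ (1 / p) + ε / 2) ^ p := fun v =>
    calc g v = (g v ^ (1 / p)) ^ p := (root_pow (hg0 v)).symm
      _ ≤ (g v ^ (1 / p) + ε / 2) ^ p := by
        gcongr
        exacts [rpow_nonneg (hg0 v) _, by linarith]
  calc g (ξ + η) ^ (1 / p)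
      ≤ ((g ξ ^ (1 / p) + ε / 2 + (g η ^ (1 / p) + ε / 2)) ^ p) ^ (1 / p) := by
        gcongr
        · exact hg0 _
        · exact hg.le_add_rpow_of_le_rpow hhom (hpos ξ) (hpos η) (le_rpow ξ) (le_rpow η)
    _ = g ξ ^ (1 / p) + g η ^ (1 / p) + ε := by
        rw [pow_root (add_pos (hpos ξ) (hpos η)).le]; ring

end Homogeneous

theorem inner_smul_apply_smul_eq_rpow_mul {E : Type*} [NormedAddCommGroup E]
    [InnerProductSpace ℝ E] {p : ℝ} {B : E → E}
    (hB : ∀ (t : ℝ) ξ, B (t • ξ) = (|t| ^ (p - 2) * t) • B ξ) {t : ℝ} (ht : 0 < t) (ξ : E) :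
    inner ℝ (B (t • ξ)) (t • ξ) = t ^ p * inner ℝ (B ξ) ξ := by
  have hpow : t ^ (p - 2) * t * t = t ^ p := by
    rw [rpow_sub ht, rpow_two]; field_simp
  rw [hB, real_inner_smul_left, real_inner_smul_right, abs_of_pos ht, ← mul_assoc, hpow]

namespace MeasureTheory

variable {α : Type*} [MeasurableSpace α] {μ : Measure α} {p : ℝ}

theorem lintegral_rpow_one_div_le_add (hp : 1 ≤ p) {F G H : α → ENNReal}
    (hF : AEMeasurable F μ) (hG : AEMeasurable G μ)
    (hFGH : ∀ x, H x ^ (1 / p) ≤ F x ^ (1 / p) + G x ^ (1 / p)) :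
    (∫⁻ x, H x ∂μ) ^ (1 / p) ≤ (∫⁻ x, F x ∂μ) ^ (1 / p) + (∫⁻ x, G x ∂μ) ^ (1 / p) := by
  have hp0 : p ≠ 0 := by positivity
  have root_pow : ∀ u : ENNReal, (u ^ (1 / p)) ^ p = u := fun u => by
    rw [one_div, ENNReal.rpow_inv_rpow hp0]
  calc (∫⁻ x, H x ∂μ) ^ (1 / p)
      ≤ (∫⁻ x, (F x ^ (1 / p) + G x ^ (1 / p)) ^ p ∂μ) ^ (1 / p) := by
        gcongr with x
        rw [← root_pow (H x)]
        gcongr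
        exact hFGH x
    _ ≤ (∫⁻ x, (F x ^ (1 / p)) ^ p ∂μ) ^ (1 / p) + (∫⁻ x, (G x ^ (1 / p)) ^ p ∂μ) ^ (1 / p) :=
        ENNReal.lintegral_Lp_add_le (hF.pow_const _) (hG.pow_const _) hp
    _ = (∫⁻ x, F x ∂μ) ^ (1 / p) + (∫⁻ x, G x ∂μ) ^ (1 / p) := by simp only [root_pow]

theorem integral_rpow_one_div_le_add (hp : 1 ≤ p) {f g h : α → ℝ}
    (hf0 : ∀ x, 0 ≤ f x) (hg0 : ∀ x, 0 ≤ g x) (hh0 : ∀ x, 0 ≤ h x)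
    (hf : Integrable f μ) (hg : Integrable g μ)
    (hfgh : ∀ x, h x ^ (1 / p) ≤ f x ^ (1 / p) + g x ^ (1 / p)) :
    (∫ x, h x ∂μ) ^ (1 / p) ≤ (∫ x, f x ∂μ) ^ (1 / p) + (∫ x, g x ∂μ) ^ (1 / p) := by
  have hq : 0 < 1 / p := by positivity
  have hroot : ∀ {k : α → ℝ}, (∀ x, 0 ≤ k x) → 0 ≤ (∫ x, k x ∂μ) ^ (1 / p) := fun hk =>
    rpow_nonneg (integral_nonneg hk) _
  by_cases hh : Integrable h μ
  swap
  -- the Bochner integral of a non-integrable `h` is `0`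
  · rw [integral_undef hh, zero_rpow hq.ne']
    exact add_nonneg (hroot hf0) (hroot hg0)
  have ofReal_root : ∀ {k : α → ℝ}, (∀ x, 0 ≤ k x) → Integrable k μ →
      ENNReal.ofReal ((∫ x, k x ∂μ) ^ (1 / p)) = (∫⁻ x, ENNReal.ofReal (k x) ∂μ) ^ (1 / p) :=
    fun hk0 hk => by
      rw [← ENNReal.ofReal_rpow_of_nonneg (integral_nonneg hk0) hq.le,
        ofReal_integral_eq_lintegral_ofReal hk (ae_of_all _ hk0)]
  rw [← ENNReal.ofReal_le_ofReal_iff (add_nonneg (hroot hf0) (hroot hg0)),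
    ENNReal.ofReal_add (hroot hf0) (hroot hg0), ofReal_root hh0 hh, ofReal_root hf0 hf,
    ofReal_root hg0 hg]
  refine lintegral_rpow_one_div_le_add hp hf.aemeasurable.ennreal_ofReal
    hg.aemeasurable.ennreal_ofReal fun x => ?_
  rw [ENNReal.ofReal_rpow_of_nonneg (hh0 x) hq.le, ENNReal.ofReal_rpow_of_nonneg (hf0 x) hq.le,
    ENNReal.ofReal_rpow_of_nonneg (hg0 x) hq.le,
    ← ENNReal.ofReal_add (rpow_nonneg (hf0 x) _) (rpow_nonneg (hg0 x) _)]
  exact ENNReal.ofReal_le_ofReal (hfgh x)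

end MeasureTheory

theorem integrated_minkowski_general {n : ℕ} (p : ℝ) (hp : 1 < p)
    (Ω : Set (EuclideanSpace ℝ (Fin n)))
    (A : EuclideanSpace ℝ (Fin n) → EuclideanSpace ℝ (Fin n) → EuclideanSpace ℝ (Fin n))
    (Γ₁ Γ₂ : EuclideanSpace ℝ (Fin n) → EuclideanSpace ℝ (Fin n))
    (hpos : ∀ x ξ, (0 : ℝ) ≤ inner ℝ (A x ξ) ξ)
    (hhom : ∀ x (t : ℝ) ξ, A x (t • ξ) = (|t| ^ (p - 2) * t) • A x ξ)
    (hconv : ∀ x, ConvexOn ℝ Set.univ fun ξ : EuclideanSpace ℝ (Fin n) => (inner ℝ (A x ξ) ξ : ℝ))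
    (hi1 : IntegrableOn (fun x => (inner ℝ (A x (Γ₁ x)) (Γ₁ x) : ℝ)) Ω)
    (hi2 : IntegrableOn (fun x => (inner ℝ (A x (Γ₂ x)) (Γ₂ x) : ℝ)) Ω) :
    (∫ x in Ω, (inner ℝ (A x (Γ₁ x + Γ₂ x)) (Γ₁ x + Γ₂ x) : ℝ)) ^ (1 / p)
      ≤ (∫ x in Ω, (inner ℝ (A x (Γ₁ x)) (Γ₁ x) : ℝ)) ^ (1 / p)
        + (∫ x in Ω, (inner ℝ (A x (Γ₂ x)) (Γ₂ x) : ℝ)) ^ (1 / p) := by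
  refine integral_rpow_one_div_le_add hp.le (fun x => hpos x _) (fun x => hpos x _)
    (fun x => hpos x _) hi1 hi2 fun x => ?_
  exact (hconv x).rpow_one_div_add_le (by linarith) (hpos x)
    (fun _ ht ξ => inner_smul_apply_smul_eq_rpow_mul (hhom x) ht ξ) (Γ₁ x) (Γ₂ x)

/-- Integrated Minkowski inequality for a (p-1)-homogeneous operator with convex
energy, over a set Ω ⊂ ℝⁿ. -/
theorem integrated_minkowski {n : ℕ} (p : ℝ) (hp : 1 < p)
    (Ω : Set (EuclideanSpace ℝ (Fin n))) (hΩ : IsOpen Ω)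
    (A : EuclideanSpace ℝ (Fin n) → EuclideanSpace ℝ (Fin n) → EuclideanSpace ℝ (Fin n))
    (Γ₁ Γ₂ : EuclideanSpace ℝ (Fin n) → EuclideanSpace ℝ (Fin n))
    (hpos : ∀ x ξ, (0 : ℝ) ≤ inner ℝ (A x ξ) ξ)
    (hhom : ∀ x (t : ℝ) ξ, A x (t • ξ) = (|t| ^ (p - 2) * t) • A x ξ)
    (hconv : ∀ x, ConvexOn ℝ Set.univ fun ξ : EuclideanSpace ℝ (Fin n) => (inner ℝ (A x ξ) ξ : ℝ))
    (hi1 : IntegrableOn (fun x => (inner ℝ (A x (Γ₁ x)) (Γ₁ x) : ℝ)) Ω)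
    (hi2 : IntegrableOn (fun x => (inner ℝ (A x (Γ₂ x)) (Γ₂ x) : ℝ)) Ω)
    (hi3 : IntegrableOn (fun x => (inner ℝ (A x (Γ₁ x + Γ₂ x)) (Γ₁ x + Γ₂ x) : ℝ)) Ω) :
    (∫ x in Ω, (inner ℝ (A x (Γ₁ x + Γ₂ x)) (Γ₁ x + Γ₂ x) : ℝ)) ^ (1 / p)
      ≤ (∫ x in Ω, (inner ℝ (A x (Γ₁ x)) (Γ₁ x) : ℝ)) ^ (1 / p)
        + (∫ x in Ω, (inner ℝ (A x (Γ₂ x)) (Γ₂ x) : ℝ)) ^ (1 / p) :=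
  integrated_minkowski_general p hp Ω A Γ₁ Γ₂ hpos hhom hconv hi1 hi2
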